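/- If G is a connected block graph, then mdim(G) = |V(G)| − ζ(G), where ζ(G) is the number of cut vertices of G. -/

import Mathlib

open SimpleGraph

variable {V : Type*}

/-- Distance from a vertex `w` to an (unordered) edge `e`:
the minimum of the distances to the two endpoints. -/
noncomputable def edgeVertexDist (G : SimpleGraph V) (w : V) (e : Sym2 V) : ℕ :=
  Sym2.lift ⟨fun a b => min (G.dist a w) (G.dist b w), fun a b => by simp [min_comm]⟩ e

/-- Distance from a vertex `w` to a mixed element (vertex or edge). -/
noncomputable def mixedDist (G : SimpleGraph V) (w : V) : V ⊕ G.edgeSet → ℕ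
  | Sum.inl v => G.dist v w
  | Sum.inr e => edgeVertexDist G w e.val

/-- `W` is a mixed resolving set: every two distinct mixed elements are
distinguished by the distance to some vertex of `W`. -/
def IsMixedResolving (G : SimpleGraph V) (W : Set V) : Prop :=
  ∀ x y : V ⊕ G.edgeSet, x ≠ y → ∃ w ∈ W, mixedDist G w x ≠ mixedDist G w y

/-- The mixed metric dimension of a finite graph. -/
noncomputable def mdim [Fintype V] (G : SimpleGraph V) : ℕ :=
  sInf {n | ∃ W : Finset V, W.card = n ∧ IsMixedResolving G ↑W}

/-- `y` is a maximal neighbor of `x`: `y` is a neighbor of `x` adjacent to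
every neighbor of `x` other than `y` itself. -/
def IsMaxNeighbor (G : SimpleGraph V) (x y : V) : Prop :=
  G.Adj x y ∧ ∀ z, G.Adj x z → z ≠ y → G.Adj y z

/-- `v` is a cut vertex of `G`: deleting `v` disconnects the graph. -/
def IsCutVertex (G : SimpleGraph V) (v : V) : Prop :=
  ¬ (G.induce {w | w ≠ v}).Connected

/-- A set `s` induces a nonseparable (connected, without cut vertices)
subgraph of `G`. -/
def IsNonseparable (G : SimpleGraph V) (s : Set V) : Prop :=
  (G.induce s).Connected ∧ ∀ v ∈ s, s = {v} ∨ (G.induce (s \ {v})).Connected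

/-- `s` is (the vertex set of) a block of `G`: a maximal nonseparable
subgraph. -/
def IsBlock (G : SimpleGraph V) (s : Set V) : Prop :=
  IsNonseparable G s ∧ ∀ t : Set V, s ⊆ t → IsNonseparable G t → t = s

/-- `G` is a block graph: every block of `G` is complete. -/
def IsBlockGraph (G : SimpleGraph V) : Prop :=
  ∀ s : Set V, IsBlock G s → G.IsClique s


/-!
The non-cut vertices form a mixed resolving set of every finite connected graph, and in a block
graph they lie in every mixed resolving set.

For the first half, fix `u ≠ v` and let `w` maximise `d(u, w)` among the vertices all of whose
walks from `u` pass through `v`. If `w` were a cut vertex, some vertex behind `w` would be further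
away, so `w` is not a cut vertex, and it sees `v` strictly closer than `u` and than every neighbour
of `u` other than `v`. This separates any two distinct vertices or edges.

For the second half, a non-cut vertex `x` of a block graph is simplicial: two non-adjacent
neighbours of `x`, joined by a path avoiding `x`, would close a cycle through `x`; a cycle is
nonseparable, hence lies in a block, which is a clique. So `x` has a neighbour `y` adjacent to all
other neighbours of `x`, and then `x` is the only vertex telling `y` apart from the edge `xy`.
-/

namespace SimpleGraph

variable {G : SimpleGraph V} {u v w x b : V}

theorem dist_add_dist_le_of_forall_mem_support (hr : G.Reachable u w)
    (h : ∀ p : G.Walk u w, v ∈ p.support) : G.dist u v + G.dist v w ≤ G.dist u w := by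
  classical
  obtain ⟨p, hp⟩ := hr.exists_walk_length_eq_dist
  have hv := h p
  calc G.dist u v + G.dist v w
      ≤ (p.takeUntil v hv).length + (p.dropUntil v hv).length :=
        add_le_add (dist_le _) (dist_le _)
    _ = G.dist u w := by rw [← Walk.length_append, p.take_spec hv, hp]

theorem dist_lt_of_forall_mem_support (hr : G.Reachable u w)
    (h : ∀ p : G.Walk u w, v ∈ p.support) (huv : u ≠ v) : G.dist v w < G.dist u w := by
  classical
  obtain ⟨p⟩ := hr
  have hpos : 0 < G.dist u v := (p.takeUntil v (h p)).reachable.pos_dist_of_ne huv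
  have := dist_add_dist_le_of_forall_mem_support ⟨p⟩ h
  omega

theorem forall_mem_support_of_adj (h : ∀ p : G.Walk u w, v ∈ p.support) (huv : u ≠ v)
    (hub : G.Adj u b) (p : G.Walk b w) : v ∈ p.support := by
  simpa [huv.symm] using h (Walk.cons hub p)

theorem Walk.IsCycle.connected_induce_support_diff_singleton {c : G.Walk u u} (hc : c.IsCycle)
    (hx : x ∈ c.support) : (G.induce ({y | y ∈ c.support} \ {x})).Connected := by
  classical
  suffices h : ∀ c : G.Walk x x, c.IsCycle → (G.induce ({y | y ∈ c.support} \ {x})).Connected by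
    have hrot : {y | y ∈ (c.rotate x hx).support} = {y | y ∈ c.support} :=
      Set.ext fun _ => Walk.mem_support_rotate_iff ..
    exact hrot ▸ h _ (hc.rotate hx)
  rintro (_ | ⟨hxz, q⟩) hc
  · exact (Walk.not_isCycle_nil hc).elim
  -- removing `x` from the cycle leaves the path `q.reverse` without its first vertex `x`
  have hr : q.reverse.IsPath := ((Walk.cons_isCycle_iff q hxz).mp hc).1.reverse
  have hsupp := Walk.cons_support_tail (Walk.not_nil_of_ne hxz.ne : ¬ q.reverse.Nil)
  have hxr : x ∉ q.reverse.tail.support := by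
    have := hr.support_nodup
    rw [← hsupp, List.nodup_cons] at this
    exact this.1
  suffices hset : {y | y ∈ (Walk.cons hxz q).support} \ {x} = {y | y ∈ q.reverse.tail.support} by
    rw [hset]
    exact q.reverse.tail.connected_induce_support
  ext z
  have : z ∈ q.support ↔ z = x ∨ z ∈ q.reverse.tail.support := by
    rw [← List.mem_cons, hsupp, Walk.support_reverse, List.mem_reverse]
  simp only [Walk.support_cons, Set.mem_sdiff, Set.mem_ofPred_eq, List.mem_cons, this,
    Set.mem_singleton_iff]
  grind

theorem Walk.IsCycle.isNonseparable {c : G.Walk u u} (hc : c.IsCycle) :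
    IsNonseparable G {y | y ∈ c.support} :=
  ⟨c.connected_induce_support, fun _ hx => .inr (hc.connected_induce_support_diff_singleton hx)⟩

end SimpleGraph

section

variable {G : SimpleGraph V} {u v w x y a b : V}

theorem IsCutVertex.exists_forall_mem_support (hv : IsCutVertex G v) (huv : u ≠ v) :
    ∃ w, w ≠ v ∧ ∀ p : G.Walk u w, v ∈ p.support := by
  by_contra! h
  refine hv (connected_iff_exists_forall_reachable _ |>.mpr ⟨⟨u, huv⟩, fun ⟨w, hw⟩ => ?_⟩)
  obtain ⟨p, hp⟩ := h w hw
  exact ⟨p.induce _ fun z hz (hzv : z = v) => hp (hzv ▸ hz)⟩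

theorem exists_not_isCutVertex_forall_mem_support [Finite V] (hG : G.Connected) (huv : u ≠ v) :
    ∃ w, ¬ IsCutVertex G w ∧ ∀ p : G.Walk u w, v ∈ p.support := by
  classical
  obtain ⟨w, hw, hmax⟩ := Set.exists_max_image {w | ∀ p : G.Walk u w, v ∈ p.support}
    (G.dist u) (Set.toFinite _) ⟨v, fun p => p.end_mem_support⟩
  refine ⟨w, fun hcut => ?_, hw⟩
  have huw : u ≠ w := by
    rintro rfl
    simpa [huv.symm] using hw Walk.nil
  obtain ⟨y, hyw, hy⟩ := hcut.exists_forall_mem_support huw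
  have hyS : ∀ p : G.Walk u y, v ∈ p.support := fun p =>
    p.support_takeUntil_subset_support (hy p) (hw _)
  have h1 := dist_add_dist_le_of_forall_mem_support (hG u y) hy
  have h2 := (hG w y).pos_dist_of_ne hyw.symm
  have h3 := hmax y hyS
  omega

theorem exists_not_isCutVertex_dist_lt_of_ne [Finite V] (hG : G.Connected) (huv : u ≠ v) :
    ∃ w, ¬ IsCutVertex G w ∧ G.dist v w < G.dist u w := by
  obtain ⟨w, hw, h⟩ := exists_not_isCutVertex_forall_mem_support hG huv
  exact ⟨w, hw, dist_lt_of_forall_mem_support (hG u w) h huv⟩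

@[simp]
theorem edgeVertexDist_mk : edgeVertexDist G w s(a, b) = min (G.dist a w) (G.dist b w) := rfl

theorem edgeVertexDist_le {e : Sym2 V} (hx : x ∈ e) : edgeVertexDist G w e ≤ G.dist x w := by
  obtain ⟨y, rfl⟩ := Sym2.mem_iff_exists.mp hx
  exact min_le_left _ _

theorem exists_not_isCutVertex_dist_lt_edgeVertexDist [Finite V] (hG : G.Connected)
    (hab : G.Adj a b) (ha : a ≠ v) (hb : b ≠ v) :
    ∃ w, ¬ IsCutVertex G w ∧ G.dist v w < edgeVertexDist G w s(a, b) := by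
  obtain ⟨w, hw, h⟩ := exists_not_isCutVertex_forall_mem_support hG ha
  have hbw := forall_mem_support_of_adj h ha hab
  exact ⟨w, hw, lt_min (dist_lt_of_forall_mem_support (hG a w) h ha)
    (dist_lt_of_forall_mem_support (hG b w) hbw hb)⟩

theorem exists_not_isCutVertex_dist_ne_edgeVertexDist [Finite V] (hG : G.Connected)
    {e : Sym2 V} (he : e ∈ G.edgeSet) (v : V) :
    ∃ w, ¬ IsCutVertex G w ∧ G.dist v w ≠ edgeVertexDist G w e := by
  by_cases hv : v ∈ e
  · obtain ⟨b, rfl⟩ := Sym2.mem_iff_exists.mp hv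
    obtain ⟨w, hw, hlt⟩ := exists_not_isCutVertex_dist_lt_of_ne hG (G.ne_of_adj he)
    refine ⟨w, hw, ?_⟩
    rw [edgeVertexDist_mk, min_eq_right hlt.le]
    exact hlt.ne'
  · induction e using Sym2.ind with
    | _ a b =>
      obtain ⟨ha, hb⟩ : a ≠ v ∧ b ≠ v := by simpa [Sym2.mem_iff, eq_comm] using hv
      obtain ⟨w, hw, hlt⟩ := exists_not_isCutVertex_dist_lt_edgeVertexDist hG he ha hb
      exact ⟨w, hw, hlt.ne⟩

theorem exists_not_isCutVertex_edgeVertexDist_ne [Finite V] (hG : G.Connected)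
    {e f : Sym2 V} (he : e ∈ G.edgeSet) (hf : f ∈ G.edgeSet) (hef : e ≠ f) :
    ∃ w, ¬ IsCutVertex G w ∧ edgeVertexDist G w e ≠ edgeVertexDist G w f := by
  obtain ⟨x, hxe, hxf⟩ : ∃ x ∈ e, x ∉ f := by
    by_contra! hsub
    induction e using Sym2.ind with
    | _ a b =>
      exact hef (Sym2.eq_of_ne_mem (G.ne_of_adj he) (Sym2.mem_mk_left a b)
        (Sym2.mem_mk_right a b) (hsub a (Sym2.mem_mk_left a b)) (hsub b (Sym2.mem_mk_right a b)))
  induction f using Sym2.ind with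
  | _ c d =>
    obtain ⟨hc, hd⟩ : c ≠ x ∧ d ≠ x := by simpa [Sym2.mem_iff, eq_comm] using hxf
    obtain ⟨w, hw, hlt⟩ := exists_not_isCutVertex_dist_lt_edgeVertexDist hG hf hc hd
    exact ⟨w, hw, ((edgeVertexDist_le hxe).trans_lt hlt).ne⟩

theorem isMixedResolving_setOf_not_isCutVertex [Finite V] (hG : G.Connected) :
    IsMixedResolving G {v | ¬ IsCutVertex G v} := by
  rintro (u | ⟨e, he⟩) (v | ⟨f, hf⟩) hne
  · exact exists_not_isCutVertex_dist_lt_of_ne hG (by simpa using hne) |>.imp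
      fun w ⟨hw, hlt⟩ => ⟨hw, hlt.ne'⟩
  · exact exists_not_isCutVertex_dist_ne_edgeVertexDist hG hf u
  · exact exists_not_isCutVertex_dist_ne_edgeVertexDist hG he v |>.imp
      fun w ⟨hw, hne⟩ => ⟨hw, hne.symm⟩
  · exact exists_not_isCutVertex_edgeVertexDist_ne hG he hf (by simpa using hne)

theorem IsMaxNeighbor.dist_le (h : IsMaxNeighbor G x y) (hr : G.Reachable x w) (hw : w ≠ x) :
    G.dist y w ≤ G.dist x w := by
  obtain ⟨p, hp⟩ := hr.exists_walk_length_eq_dist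
  cases p with
  | nil => exact absurd rfl hw
  | cons hxz q =>
    rename_i z
    rw [← hp, Walk.length_cons]
    by_cases hzy : z = y
    · subst hzy
      exact (SimpleGraph.dist_le q).trans (Nat.le_succ _)
    · exact SimpleGraph.dist_le (Walk.cons (h.2 z hxz hzy) q)

theorem IsMaxNeighbor.mem_of_isMixedResolving (hG : G.Connected) (h : IsMaxNeighbor G x y)
    {W : Set V} (hW : IsMixedResolving G W) : x ∈ W := by
  obtain ⟨w, hwW, hne⟩ := hW (Sum.inr ⟨s(x, y), h.1⟩) (Sum.inl y) (by simp)
  rcases eq_or_ne w x with rfl | hwx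
  · exact hwW
  · exact absurd (min_eq_right (h.dist_le (hG x w) hwx)) hne

theorem IsBlockGraph.isClique_of_isNonseparable [Finite V] (hB : IsBlockGraph G) {s : Set V}
    (hs : IsNonseparable G s) : G.IsClique s := by
  obtain ⟨t, hst, ht⟩ := (Set.toFinite {t | IsNonseparable G t}).exists_le_maximal hs
  exact (hB t ⟨ht.prop, fun t' htt' ht' => (ht.eq_of_le ht' htt').symm⟩).subset hst

theorem IsBlockGraph.adj_of_not_isCutVertex [Finite V] (hB : IsBlockGraph G)
    (hv : ¬ IsCutVertex G v) (ha : G.Adj v a) (hb : G.Adj v b) (hab : a ≠ b) : G.Adj a b := by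
  classical
  obtain ⟨q⟩ := (not_not.mp hv) ⟨a, ha.ne'⟩ ⟨b, hb.ne'⟩
  let p : G.Walk a b := (q.map (Embedding.induce _).toHom).bypass
  have hvp : v ∉ p.support := fun h => by
    have := (q.map _).support_bypass_subset_support h
    rw [Walk.support_map, List.mem_map] at this
    obtain ⟨z, -, hz⟩ := this
    exact z.2 hz
  have hc : (Walk.cons ha (p.concat hb.symm)).IsCycle := by
    refine (Walk.cons_isCycle_iff _ _).mpr ⟨(q.map _).bypass_isPath.concat hvp _, fun he => ?_⟩
    simp only [Walk.edges_concat, List.concat_eq_append, List.mem_append,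
      List.mem_singleton] at he
    rcases he with he | he
    · exact hvp (p.fst_mem_support_of_mem_edges he)
    · simp only [Sym2.eq_iff] at he
      grind [ha.ne]
  exact hB.isClique_of_isNonseparable hc.isNonseparable (by simp) (by simp) hab

theorem IsBlockGraph.exists_isMaxNeighbor [Finite V] (hG : G.Connected) (hB : IsBlockGraph G)
    (hx : ¬ IsCutVertex G x) : ∃ y, IsMaxNeighbor G x y := by
  obtain ⟨⟨z, hz⟩⟩ := (not_not.mp hx).nonempty
  obtain ⟨y, hy⟩ := (hG x z).nonempty_neighborSet_left (Ne.symm hz)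
  exact ⟨y, hy, fun z hxz hzy => hB.adj_of_not_isCutVertex hx hy hxz (Ne.symm hzy)⟩

theorem mdim_eq_ncard [Fintype V] {N : Set V} (hN : IsMixedResolving G N)
    (hsub : ∀ W : Set V, IsMixedResolving G W → N ⊆ W) : mdim G = N.ncard := by
  classical
  have hmem : N.ncard ∈ {n | ∃ W : Finset V, W.card = n ∧ IsMixedResolving G ↑W} :=
    ⟨N.toFinset, (Set.ncard_eq_toFinset_card' N).symm, by simpa using hN⟩
  refine le_antisymm (Nat.sInf_le hmem) (le_csInf ⟨_, hmem⟩ ?_)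
  rintro n ⟨W, rfl, hW⟩
  simpa using Set.ncard_le_ncard (hsub _ hW) W.finite_toSet

end

/-- A connected block graph satisfies `mdim G = |V(G)| - ζ(G)`. -/
theorem stmt_15 [Fintype V] (G : SimpleGraph V) (hG : G.Connected)
    (hB : IsBlockGraph G) :
    mdim G = Fintype.card V - {v : V | IsCutVertex G v}.ncard := by
  have hcard := Set.ncard_add_ncard_compl {v : V | ¬ IsCutVertex G v}
  have hcompl : {v : V | ¬ IsCutVertex G v}ᶜ = {v | IsCutVertex G v} := by ext; simp
  rw [Nat.card_eq_fintype_card, hcompl] at hcard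
  rw [mdim_eq_ncard (isMixedResolving_setOf_not_isCutVertex hG) fun W hW x hx =>
    (hB.exists_isMaxNeighbor hG hx).elim fun y hy => hy.mem_of_isMixedResolving hG hW]
  omega
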